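/- arXiv:2204.06982 — 4 statements merged into one kernel-verified Lean document; each statement's English description precedes it below -/
import Mathlib

section
/- Let 0<α<1 and 1<b<2, let X = X_α(γ,1,0) be a positive α-stable random variable with density f and Laplace transform exp(−λ t^α), λ>0. Define the density f̃(x) = (1/(α·E[X^{α(b−1)}])) · f(x^{−1/α}) / x^{b+1/α} for x>0, and let Z>0 be a random variable with density f̃. Then for all complex r with Re(r) > b−2, E[Z^r] = λ^{−r} · Γ(2−b+r)·Γ(1−α(b−1)) / (Γ(2−b)·Γ(1−α(b−r−1))). -/
open MeasureTheory Complex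

/-!
For `Re s < 1`, `Γ(1 - s) x ^ s = x ∫₀^∞ t ^ (-s) e^{-x t} dt`. Integrating against `f` and
exchanging the integrals gives `Γ(1 - s) E[X ^ s] = ∫₀^∞ t ^ (-s) (-L'(t)) dt` with
`L(t) = e^{-λ t^α}` the Laplace transform. Since `-L'(t) = λ α t^(α-1) e^{-λ t^α}`, this is a
Gamma integral: `E[X ^ s] = λ^(s/α) Γ(1 - s/α) / Γ(1 - s)` for `Re s < α`. As `f ≥ 0`, the same
formula for `-L'` justifies the exchange (Tonelli).
The substitution `x ↦ x ^ (-1/α)` gives `E[Z ^ r] = E[X ^ (α (b - r - 1))] / E[X ^ (α (b - 1))]`,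
a quotient of two instances of the moment formula.
-/

open Set

theorem mellin_exp_neg_mul {c : ℝ} (hc : 0 < c) {z : ℂ} (hz : 0 < z.re) :
    mellin (fun t => (Real.exp (-(c * t)) : ℂ)) z = (c : ℂ) ^ (-z) * Gamma z := by
  rw [mellin_comp_mul_left (fun t => (Real.exp (-t) : ℂ)) z hc, ← GammaIntegral_eq_mellin,
    ← Gamma_eq_integral hz, smul_eq_mul]

theorem mellin_exp_neg_mul_rpow {c p : ℝ} (hc : 0 < c) (hp : 0 < p) {z : ℂ} (hz : 0 < z.re) :
    mellin (fun t => (Real.exp (-(c * t ^ p)) : ℂ)) z =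
      (p : ℂ)⁻¹ * (c : ℂ) ^ (-(z / p)) * Gamma (z / p) := by
  rw [mellin_comp_rpow (fun u => (Real.exp (-(c * u)) : ℂ)) z p,
    mellin_exp_neg_mul hc (by rw [div_ofReal_re]; positivity), abs_of_pos hp, real_smul,
    ofReal_inv, mul_assoc]

theorem mellin_cpow_mul_comp_rpow_neg_inv {α : ℝ} (hα : 0 < α) (g : ℝ → ℂ) (a z : ℂ) :
    mellin (fun x => (x : ℂ) ^ a * g (x ^ (-(1 / α)))) z = α * mellin g (-α * (z + a)) := by
  have h := mellin_cpow_smul (fun x => g (x ^ (-(1 / α)))) z a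
  simp only [smul_eq_mul] at h
  rw [h, mellin_comp_rpow, abs_neg, abs_of_pos (one_div_pos.mpr hα), real_smul, one_div, inv_inv]
  congr 2
  push_cast
  field_simp

theorem ofReal_integral_rpow_mul_eq_mellin (f : ℝ → ℝ) (p : ℝ) :
    ((∫ x in Ioi (0 : ℝ), x ^ p * f x : ℝ) : ℂ) = mellin (fun x => (f x : ℂ)) (p + 1) := by
  rw [← integral_complex_ofReal, mellin, add_sub_cancel_right]
  refine setIntegral_congr_fun measurableSet_Ioi fun x (hx : 0 < x) => ?_
  push_cast [ofReal_cpow hx.le]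
  rfl

theorem mul_exp_neg_mul_le {c : ℝ} (hc : 0 < c) (x : ℝ) : x * Real.exp (-(c * x)) ≤ c⁻¹ := by
  rw [Real.exp_neg, ← div_eq_mul_inv, div_le_iff₀ (Real.exp_pos _)]
  have := mul_le_mul_of_nonneg_left (Real.add_one_le_exp (c * x)) (inv_nonneg.mpr hc.le)
  rw [mul_add, ← mul_assoc, inv_mul_cancel₀ hc.ne'] at this
  linarith [inv_pos.mpr hc]

theorem hasDerivAt_integral_mul_exp_neg_mul {f : ℝ → ℝ} (hf : IntegrableOn f (Ioi 0))
    {t : ℝ} (ht : 0 < t) :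
    IntegrableOn (fun x => x * f x * Real.exp (-(t * x))) (Ioi 0) ∧
      HasDerivAt (fun u => ∫ x in Ioi 0, f x * Real.exp (-(u * x)))
        (-∫ x in Ioi 0, x * f x * Real.exp (-(t * x))) t := by
  have hexp : ∀ u, Continuous fun x : ℝ => Real.exp (-(u * x)) := by fun_prop
  have key := hasDerivAt_integral_of_dominated_loc_of_deriv_le (μ := volume.restrict (Ioi 0))
    (F := fun u x => f x * Real.exp (-(u * x)))
    (F' := fun u x => -(x * f x * Real.exp (-(u * x))))
    (bound := fun x => (t / 2)⁻¹ * ‖f x‖) (Metric.ball_mem_nhds t (half_pos ht))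
    (.of_forall fun u => hf.aestronglyMeasurable.mul (hexp u).aestronglyMeasurable)
    ?_ ?_ ?_ (hf.norm.const_mul _) ?_
  · exact ⟨by simpa [IntegrableOn] using key.1.neg, by simpa [integral_neg] using key.2⟩
  · refine hf.mul_bdd (hexp t).aestronglyMeasurable (c := 1) ?_
    filter_upwards [self_mem_ae_restrict measurableSet_Ioi] with x (hx : 0 < x)
    rw [Real.norm_of_nonneg (Real.exp_pos _).le, Real.exp_le_one_iff]
    nlinarith
  · exact ((measurable_id.aestronglyMeasurable.mul hf.aestronglyMeasurable).mul
      (hexp t).aestronglyMeasurable).neg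
  · filter_upwards [self_mem_ae_restrict measurableSet_Ioi] with x (hx : 0 < x) u hu
    have hu : t / 2 < u := by
      linarith [(abs_sub_lt_iff.mp (Metric.mem_ball.mp hu)).2]
    have hxexp : x * Real.exp (-(u * x)) ≤ (t / 2)⁻¹ :=
      (mul_le_mul_of_nonneg_left (Real.exp_le_exp.mpr (by nlinarith)) hx.le).trans
        (mul_exp_neg_mul_le (half_pos ht) x)
    rw [norm_neg, show x * f x * Real.exp (-(u * x)) = (x * Real.exp (-(u * x))) * f x by ring,
      norm_mul, Real.norm_of_nonneg (by positivity)]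
    exact mul_le_mul_of_nonneg_right hxexp (norm_nonneg _)
  · refine .of_forall fun x u _ => ?_
    have h : HasDerivAt (fun v => -(v * x)) (-x) u := (hasDerivAt_mul_const x).neg
    exact (h.exp.const_mul (f x)).congr_deriv (by ring)


section Laplace

variable {α lam : ℝ} {f : ℝ → ℝ}

theorem integral_mul_mul_exp_neg_of_laplace (hf : IntegrableOn f (Ioi 0))
    (hL : ∀ t, 0 < t → ∫ x in Ioi 0, f x * Real.exp (-(t * x)) = Real.exp (-(lam * t ^ α)))
    {t : ℝ} (ht : 0 < t) :
    ∫ x in Ioi 0, x * f x * Real.exp (-(t * x)) =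
      lam * α * t ^ (α - 1) * Real.exp (-(lam * t ^ α)) := by
  have hL' : (fun u => Real.exp (-(lam * u ^ α))) =ᶠ[nhds t]
      fun u => ∫ x in Ioi 0, f x * Real.exp (-(u * x)) :=
    Filter.eventually_of_mem (Ioi_mem_nhds ht) fun u hu => (hL u hu).symm
  have h1 := ((hasDerivAt_integral_mul_exp_neg_mul hf ht).2.congr_of_eventuallyEq hL')
  have h2 := (((Real.hasDerivAt_rpow_const (p := α) (Or.inl ht.ne')).const_mul lam).neg).exp
  linear_combination -(h1.unique h2)

theorem integrable_prod_cpow_mul_laplace_kernel (hα : 0 < α) (hlam : 0 < lam)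
    (hf_nonneg : ∀ x, 0 ≤ f x) (hf : IntegrableOn f (Ioi 0))
    (hL : ∀ t, 0 < t → ∫ x in Ioi 0, f x * Real.exp (-(t * x)) = Real.exp (-(lam * t ^ α)))
    {s : ℂ} (hs : s.re < α) :
    Integrable (Function.uncurry fun t x : ℝ =>
        (t : ℂ) ^ (-s) * ((x * f x * Real.exp (-(t * x)) : ℝ) : ℂ))
      ((volume.restrict (Ioi 0)).prod (volume.restrict (Ioi 0))) := by
  have hmeas : AEStronglyMeasurable (Function.uncurry fun t x : ℝ =>
      (t : ℂ) ^ (-s) * ((x * f x * Real.exp (-(t * x)) : ℝ) : ℂ))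
      ((volume.restrict (Ioi 0)).prod (volume.restrict (Ioi 0))) := by
    refine (((measurable_ofReal.comp measurable_fst).pow_const (-s) :
      Measurable fun p : ℝ × ℝ => (p.1 : ℂ) ^ (-s))).aestronglyMeasurable.mul
      (continuous_ofReal.comp_aestronglyMeasurable ?_)
    exact ((measurable_snd.aestronglyMeasurable.mul
      (hf.aestronglyMeasurable.comp_snd)).mul (by fun_prop : Continuous
        fun p : ℝ × ℝ => Real.exp (-(p.1 * p.2))).aestronglyMeasurable)
  refine (integrable_prod_iff hmeas).mpr ⟨?_, ?_⟩
  · filter_upwards [self_mem_ae_restrict measurableSet_Ioi] with t (ht : 0 < t)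
    exact ((hasDerivAt_integral_mul_exp_neg_mul hf ht).1.ofReal (𝕜 := ℂ)).const_mul
      ((t : ℂ) ^ (-s))
  · have hnorm : ∀ t ∈ Ioi (0 : ℝ), ∫ x in Ioi 0,
        ‖(t : ℂ) ^ (-s) * ((x * f x * Real.exp (-(t * x)) : ℝ) : ℂ)‖ =
        lam * α * (t ^ (α - s.re - 1) * Real.exp (-lam * t ^ α)) := by
      intro t (ht : 0 < t)
      calc _ = ∫ x in Ioi 0, t ^ (-s.re) * (x * f x * Real.exp (-(t * x))) := by
            refine setIntegral_congr_fun measurableSet_Ioi fun x (hx : 0 < x) => ?_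
            rw [norm_mul, norm_cpow_eq_rpow_re_of_pos ht, norm_real, neg_re,
              Real.norm_of_nonneg (by have := hf_nonneg x; positivity)]
        _ = t ^ (-s.re) * (lam * α * t ^ (α - 1) * Real.exp (-(lam * t ^ α))) := by
            rw [integral_const_mul, integral_mul_mul_exp_neg_of_laplace hf hL ht]
        _ = _ := by
            rw [show α - s.re - 1 = -s.re + (α - 1) by ring, Real.rpow_add ht, neg_mul]
            ring
    refine IntegrableOn.congr_fun ?_ (fun t ht => (hnorm t ht).symm) measurableSet_Ioi
    exact (integrableOn_rpow_mul_exp_neg_mul_rpow (by linarith) hα hlam).const_mul _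

theorem mellin_add_one_of_laplace (hα : 0 < α) (hlam : 0 < lam)
    (hf_nonneg : ∀ x, 0 ≤ f x) (hf : IntegrableOn f (Ioi 0))
    (hL : ∀ t, 0 < t → ∫ x in Ioi 0, f x * Real.exp (-(t * x)) = Real.exp (-(lam * t ^ α)))
    {s : ℂ} (hsα : s.re < α) (hs1 : s.re < 1) :
    mellin (fun x => (f x : ℂ)) (s + 1) =
      (lam : ℂ) ^ (s / α) * Gamma (1 - s / α) / Gamma (1 - s) := by
  have hα' : (α : ℂ) ≠ 0 := ofReal_ne_zero.mpr hα.ne'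
  have hlam' : (lam : ℂ) ≠ 0 := ofReal_ne_zero.mpr hlam.ne'
  have h1s : 0 < (1 - s).re := by rw [sub_re, one_re]; linarith
  have hswap := integral_integral_swap
    (integrable_prod_cpow_mul_laplace_kernel hα hlam hf_nonneg hf hL hsα)
  have h_x_first : ∀ t ∈ Ioi (0 : ℝ), ∫ x in Ioi 0,
      (t : ℂ) ^ (-s) * ((x * f x * Real.exp (-(t * x)) : ℝ) : ℂ) =
      (lam * α : ℂ) * ((t : ℂ) ^ (α - s - 1) • (Real.exp (-(lam * t ^ α)) : ℂ)) := by
    intro t (ht : 0 < t)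
    have hpow : (t : ℂ) ^ (α - s - 1) = (t : ℂ) ^ (-s) * ((t ^ (α - 1) : ℝ) : ℂ) := by
      rw [ofReal_cpow ht.le, ← cpow_add _ _ (ofReal_ne_zero.mpr ht.ne')]
      push_cast
      ring_nf
    rw [integral_const_mul, integral_complex_ofReal, integral_mul_mul_exp_neg_of_laplace hf hL ht,
      hpow, smul_eq_mul]
    push_cast
    ring
  have h_t_first : ∀ x ∈ Ioi (0 : ℝ), ∫ t : ℝ in Ioi 0,
      (t : ℂ) ^ (-s) * ((x * f x * Real.exp (-(t * x)) : ℝ) : ℂ) =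
      Gamma (1 - s) * ((x : ℂ) ^ (s + 1 - 1) • (f x : ℂ)) := by
    intro x (hx : 0 < x)
    have hmellin := mellin_exp_neg_mul hx h1s
    simp only [mellin, smul_eq_mul, sub_sub_cancel_left] at hmellin
    calc _ = ((x * f x : ℝ) : ℂ) *
          ∫ t : ℝ in Ioi 0, (t : ℂ) ^ (-s) * (Real.exp (-(x * t)) : ℂ) := by
          rw [← integral_const_mul]
          refine setIntegral_congr_fun measurableSet_Ioi fun t _ => ?_
          push_cast
          ring_nf
      _ = _ := by
          rw [hmellin, add_sub_cancel_right, smul_eq_mul, neg_sub,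
            cpow_sub _ _ (ofReal_ne_zero.mpr hx.ne'), cpow_one]
          push_cast
          field_simp [ofReal_ne_zero.mpr hx.ne']
  rw [setIntegral_congr_fun measurableSet_Ioi h_x_first,
    setIntegral_congr_fun measurableSet_Ioi h_t_first, integral_const_mul, integral_const_mul,
    ← mellin, ← mellin, mellin_exp_neg_mul_rpow hlam hα (by rw [sub_re, ofReal_re]; linarith)]
    at hswap
  have hexp : (α - s) / α = 1 - s / α := by field_simp
  rw [eq_div_iff (Gamma_ne_zero_of_re_pos h1s), mul_comm, ← hswap, hexp, neg_sub,
    cpow_sub _ _ hlam', cpow_one]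
  field_simp

end Laplace

theorem integral_mul_exp_neg_of_complex {α lam : ℝ} {f : ℝ → ℝ}
    (hL : ∀ t : ℂ, 0 ≤ t.re →
      ∫ x in Ioi (0 : ℝ), (f x : ℂ) * exp (-t * (x : ℂ)) = exp (-(lam : ℂ) * t ^ (α : ℂ)))
    {t : ℝ} (ht : 0 ≤ t) :
    ∫ x in Ioi 0, f x * Real.exp (-(t * x)) = Real.exp (-(lam * t ^ α)) := by
  have h := hL t (by simpa using ht)
  rw [← ofReal_cpow ht] at h
  simpa only [neg_mul] using (by exact_mod_cast h :
    ∫ x in Ioi 0, f x * Real.exp (-t * x) = Real.exp (-lam * t ^ α))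

theorem integral_cpow_mul_of_eq_comp_rpow_neg_inv {α b m : ℝ} (hα : 0 < α) {f g : ℝ → ℝ}
    (hg : ∀ x : ℝ, 0 < x → g x = f (x ^ (-(1 / α))) / (α * m * x ^ (b + 1 / α))) (r : ℂ) :
    ∫ x : ℝ in Ioi 0, (x : ℂ) ^ r * (g x : ℂ) =
      (m : ℂ)⁻¹ * mellin (fun x => (f x : ℂ)) (α * (b - r - 1) + 1) := by
  have hα' : (α : ℂ) ≠ 0 := ofReal_ne_zero.mpr hα.ne'
  calc _ = mellin (fun x => ((α * m : ℂ))⁻¹ •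
          ((x : ℂ) ^ (-(b + 1 / α : ℂ)) * f (x ^ (-(1 / α))))) (r + 1) := by
        rw [mellin, add_sub_cancel_right]
        refine setIntegral_congr_fun measurableSet_Ioi fun x (hx : 0 < x) => ?_
        rw [hg x hx, cpow_neg, smul_eq_mul]
        push_cast [ofReal_cpow hx.le]
        ring
    _ = (α * m : ℂ)⁻¹ * (α * mellin (fun x => (f x : ℂ)) (-α * (r + 1 + -(b + 1 / α)))) := by
        rw [mellin_const_smul, mellin_cpow_mul_comp_rpow_neg_inv hα (fun y => (f y : ℂ)),
          smul_eq_mul]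
    _ = _ := by
        rw [show -(α : ℂ) * (r + 1 + -(b + 1 / α)) = α * (b - r - 1) + 1 by field_simp; ring]
        field_simp

theorem dilute_Z_moments_general
    (α b lam : ℝ) (hα0 : 0 < α) (hα1 : α < 1) (hb2 : b < 2)
    (hlam : 0 < lam)
    (f : ℝ → ℝ) (hf_nonneg : ∀ x, 0 ≤ f x)
    (hf_prob : ∫ x in Set.Ioi (0 : ℝ), f x = 1)
    (hLaplace : ∀ t : ℂ, 0 ≤ t.re →
      ∫ x in Set.Ioi (0 : ℝ), (f x : ℂ) * Complex.exp (-t * (x : ℂ)) =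
        Complex.exp (-(lam : ℂ) * t ^ (α : ℂ)))
    (m : ℝ) (hm : m = ∫ x in Set.Ioi (0 : ℝ), x ^ (α * (b - 1)) * f x)
    (ftilde : ℝ → ℝ)
    (hftilde : ∀ x : ℝ, 0 < x →
      ftilde x = f (x ^ (-(1 / α))) / (α * m * x ^ (b + 1 / α))) :
    ∀ r : ℂ, b - 2 < r.re →
      ∫ x in Set.Ioi (0 : ℝ), (x : ℂ) ^ r * (ftilde x : ℂ) =
        (lam : ℂ) ^ (-r) * Complex.Gamma (2 - b + r) * Complex.Gamma (1 - α * (b - 1)) /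
          (Complex.Gamma (2 - (b : ℂ)) * Complex.Gamma (1 - (α : ℂ) * (b - r - 1))) := by
  intro r hr
  have hf : IntegrableOn f (Ioi 0) := .of_integral_ne_zero (by rw [hf_prob]; exact one_ne_zero)
  have hmoment : ∀ s : ℂ, s.re < α → mellin (fun x => (f x : ℂ)) (s + 1) =
      (lam : ℂ) ^ (s / α) * Gamma (1 - s / α) / Gamma (1 - s) := fun s hs =>
    mellin_add_one_of_laplace hα0 hlam hf_nonneg hf
      (fun t ht => integral_mul_exp_neg_of_complex hLaplace ht.le) hs (hs.trans hα1)
  have hm' : (m : ℂ) = mellin (fun x => (f x : ℂ)) (α * (b - 1) + 1) := by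
    rw [hm, ofReal_integral_rpow_mul_eq_mellin]
    push_cast
    rfl
  have hre_m : ((α : ℂ) * (b - 1)).re = α * (b - 1) := by simp
  have hre_r : ((α : ℂ) * (b - r - 1)).re = α * (b - r.re - 1) := by simp
  have hG2b : Gamma (2 - b) ≠ 0 := Gamma_ne_zero_of_re_pos (by simp; linarith)
  have hGm : Gamma (1 - α * (b - 1)) ≠ 0 :=
    Gamma_ne_zero_of_re_pos (by rw [sub_re, one_re, hre_m]; nlinarith)
  have hlam_b : (lam : ℂ) ^ (b - 1 : ℂ) ≠ 0 := by simp [cpow_eq_zero_iff, hlam.ne']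
  have hpow : (lam : ℂ) ^ (b - r - 1) = lam ^ (b - 1 : ℂ) * lam ^ (-r) := by
    rw [← cpow_add _ _ (ofReal_ne_zero.mpr hlam.ne')]; ring_nf
  rw [integral_cpow_mul_of_eq_comp_rpow_neg_inv hα0 hftilde, hm',
    hmoment _ (by rw [hre_m]; nlinarith), hmoment _ (by rw [hre_r]; nlinarith),
    mul_div_cancel_left₀ _ (ofReal_ne_zero.mpr hα0.ne'),
    mul_div_cancel_left₀ _ (ofReal_ne_zero.mpr hα0.ne'), hpow,
    show (1 : ℂ) - (b - 1) = 2 - b by ring, show (1 : ℂ) - (b - r - 1) = 2 - b + r by ring]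
  field_simp

/-- complex moments of the dilute-regime limit `Z`.  Let
`0 < α < 1`, `1 < b < 2`, let `f` be the density (on `(0,∞)`) of the positive
`α`-stable law with Laplace transform `exp(-λ t^α)`, and let `Z > 0` have density
`f̃(x) = f(x^{-1/α}) / (α · E[X^{α(b-1)}] · x^{b+1/α})`.  Then for every complex `r`
with `Re r > b - 2`,
`E[Z^r] = λ^{-r} Γ(2-b+r) Γ(1-α(b-1)) / (Γ(2-b) Γ(1-α(b-r-1)))`. -/
theorem dilute_Z_moments
    (α b lam : ℝ) (hα0 : 0 < α) (hα1 : α < 1) (hb1 : 1 < b) (hb2 : b < 2)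
    (hlam : 0 < lam)
    (f : ℝ → ℝ) (hf_nonneg : ∀ x, 0 ≤ f x)
    (hf_prob : ∫ x in Set.Ioi (0 : ℝ), f x = 1)
    (hLaplace : ∀ t : ℂ, 0 ≤ t.re →
      ∫ x in Set.Ioi (0 : ℝ), (f x : ℂ) * Complex.exp (-t * (x : ℂ)) =
        Complex.exp (-(lam : ℂ) * t ^ (α : ℂ)))
    (m : ℝ) (hm : m = ∫ x in Set.Ioi (0 : ℝ), x ^ (α * (b - 1)) * f x)
    (ftilde : ℝ → ℝ)
    (hftilde : ∀ x : ℝ, 0 < x →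
      ftilde x = f (x ^ (-(1 / α))) / (α * m * x ^ (b + 1 / α))) :
    ∀ r : ℂ, b - 2 < r.re →
      ∫ x in Set.Ioi (0 : ℝ), (x : ℂ) ^ r * (ftilde x : ℂ) =
        (lam : ℂ) ^ (-r) * Complex.Gamma (2 - b + r) * Complex.Gamma (1 - α * (b - 1)) /
          (Complex.Gamma (2 - (b : ℂ)) * Complex.Gamma (1 - (α : ℂ) * (b - r - 1))) :=
  dilute_Z_moments_general α b lam hα0 hα1 hb2 hlam f hf_nonneg hf_prob hLaplace m hm ftilde hftilde
end

section
/- In the product structure limit (Lemma on extended schemes, case ℓ=2): with notation as in the subexponentiality lemma, let (P_1,P_2) be the random vector with P((P_1,P_2)=(k_1,k_2)) = w_{k_1}^{(1)} w_{k_2}^{(2)} / o_n when k_1+k_2=n. Then for each fixed k ≥ 0, lim_{n→∞} P(P_2 = k) = p_1 · w_k^{(2)} ρ_o^k / W_2(ρ_o) and lim_{n→∞} P(P_1 = k) = p_2 · w_k^{(1)} ρ_o^k / W_1(ρ_o). -/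
open Filter Topology

/-!
With `W_i = ∑ w_i(n) ρ^n` and `O = ∑ o_n ρ^n`, the convolution `o = w₁ ∗ w₂` gives
`O = W₁ W₂`; the series converge absolutely because `w_i = O(r)`. The ratio condition gives
`r(n-k)/r(n) → ρ^k`, and the component with `L_i ≠ 0` turns the limit `p_i` into a limit
`ℓ` of `r(n)/o(n)`. Then
`w₁(n-k)/o(n) = (w₁(n-k)/r(n-k)) (r(n-k)/r(n)) (r(n)/o(n)) → L₁ ρ^k ℓ = (p₁/W₂) ρ^k`.
-/

/-- A nonnegative sequence `r` satisfies the subexponentiality condition with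
parameter `ρ ∈ (0,∞)` (the radius of convergence of `∑ r_n z^n`). -/
def Subexponential (r : ℕ → ℝ) (ρ : ℝ) : Prop :=
  0 < ρ ∧ (∀ n, 0 ≤ r n) ∧ (∀ᶠ n in atTop, 0 < r n) ∧
    Summable (fun n => r n * ρ ^ n) ∧
    Tendsto (fun n => r n / r (n + 1)) atTop (𝓝 ρ) ∧
    Tendsto
      (fun n => (∑ ij ∈ Finset.HasAntidiagonal.antidiagonal n, r ij.1 * r ij.2) / r n)
      atTop (𝓝 (2 * ∑' n, r n * ρ ^ n))

open Finset.HasAntidiagonal in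
theorem tsum_sum_antidiagonal_mul_pow {a b : ℕ → ℝ} {ρ : ℝ}
    (ha : Summable fun n => ‖a n * ρ ^ n‖) (hb : Summable fun n => ‖b n * ρ ^ n‖) :
    ∑' n, (∑ ij ∈ antidiagonal n, a ij.1 * b ij.2) * ρ ^ n =
      (∑' n, a n * ρ ^ n) * ∑' n, b n * ρ ^ n := by
  rw [tsum_mul_tsum_eq_tsum_sum_antidiagonal_of_summable_norm ha hb]
  refine tsum_congr fun n => ?_
  rw [Finset.sum_mul]
  refine Finset.sum_congr rfl fun ij hij => ?_
  rw [← mem_antidiagonal.mp hij, pow_add]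
  ring

theorem summable_norm_mul_of_tendsto_div {r w x : ℕ → ℝ} {L : ℝ}
    (hr : ∀ᶠ n in atTop, r n ≠ 0) (hrx : Summable fun n => r n * x n)
    (hw : Tendsto (fun n => w n / r n) atTop (𝓝 L)) :
    Summable fun n => ‖w n * x n‖ := by
  have hO : (fun n => w n) =O[atTop] r :=
    Asymptotics.isBigO_of_div_tendsto_nhds (hr.mono fun n hn h => absurd h hn) L hw
  exact summable_of_isBigO_nat hrx (hO.mul (Asymptotics.isBigO_refl x atTop)).norm_left

theorem tendsto_sub_div_pow_of_tendsto_div_succ {r : ℕ → ℝ} {ρ : ℝ}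
    (hr : ∀ᶠ n in atTop, r n ≠ 0) (hratio : Tendsto (fun n => r n / r (n + 1)) atTop (𝓝 ρ))
    (k : ℕ) : Tendsto (fun n => r (n - k) / r n) atTop (𝓝 (ρ ^ k)) := by
  induction k with
  | zero => exact tendsto_const_nhds.congr' (hr.mono fun n hn => by simp [hn])
  | succ k ih =>
    have hstep : Tendsto (fun n => r (n - (k + 1)) / r (n - (k + 1) + 1)) atTop (𝓝 ρ) :=
      hratio.comp (tendsto_sub_atTop_nat (k + 1))
    rw [pow_succ']
    refine (hstep.mul ih).congr' ?_
    filter_upwards [eventually_ge_atTop (k + 1), (tendsto_sub_atTop_nat k).eventually hr]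
      with n hn hrn
    rw [show n - (k + 1) + 1 = n - k by omega]
    exact div_mul_div_cancel₀ hrn

theorem tendsto_div_of_tendsto_div_div {r w o : ℕ → ℝ} {L q : ℝ}
    (hw : Tendsto (fun n => w n / r n) atTop (𝓝 L)) (hL : L ≠ 0)
    (hq : Tendsto (fun n => w n / o n) atTop (𝓝 q)) :
    Tendsto (fun n => r n / o n) atTop (𝓝 (q / L)) := by
  refine (hq.div hw hL).congr' ?_
  filter_upwards [hw.eventually_ne hL] with n hn
  exact div_div_div_cancel_left' _ _ (left_ne_zero_of_mul (by simpa [div_eq_mul_inv] using hn))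

theorem tendsto_sub_div_of_tendsto_div {r w o : ℕ → ℝ} {ρ L ℓ q : ℝ}
    (hr : ∀ᶠ n in atTop, r n ≠ 0) (hratio : Tendsto (fun n => r n / r (n + 1)) atTop (𝓝 ρ))
    (hℓ : Tendsto (fun n => r n / o n) atTop (𝓝 ℓ))
    (hw : Tendsto (fun n => w n / r n) atTop (𝓝 L))
    (hq : Tendsto (fun n => w n / o n) atTop (𝓝 q)) (k : ℕ) :
    Tendsto (fun n => w (n - k) / o n) atTop (𝓝 (q * ρ ^ k)) := by
  have hshift : ∀ k, Tendsto (fun n => w (n - k) / o n) atTop (𝓝 (L * ρ ^ k * ℓ)) := by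
    intro k
    refine (((hw.comp (tendsto_sub_atTop_nat k)).mul
      (tendsto_sub_div_pow_of_tendsto_div_succ hr hratio k)).mul hℓ).congr' ?_
    filter_upwards [hr, (tendsto_sub_atTop_nat k).eventually hr] with n hrn hrnk
    simp only [Function.comp_apply]
    rw [div_mul_div_cancel₀ hrnk, div_mul_div_cancel₀ hrn]
  have hqL : q = L * ℓ := tendsto_nhds_unique hq (by simpa using hshift 0)
  simpa [hqL, mul_right_comm] using hshift k

theorem tendsto_div_of_tendsto_mul_div_mul {w o : ℕ → ℝ} {O W p : ℝ} (hO : O ≠ 0) (hW : W ≠ 0)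
    (h : Tendsto (fun n => w n * O / (o n * W)) atTop (𝓝 p)) :
    Tendsto (fun n => w n / o n) atTop (𝓝 (p * W / O)) := by
  rw [mul_div_assoc]
  refine (h.mul_const (W / O)).congr fun n => ?_
  rw [mul_div_mul_comm, mul_assoc, div_mul_div_cancel₀ hW, div_self hO, mul_one]

theorem product_structure_limit_general
    (r : ℕ → ℝ) (ρ : ℝ) (hr : Subexponential r ρ)
    (w₁ w₂ : ℕ → ℝ)
    (L₁ L₂ : ℝ)
    (hL₁ : Tendsto (fun n => w₁ n / r n) atTop (𝓝 L₁))
    (hL₂ : Tendsto (fun n => w₂ n / r n) atTop (𝓝 L₂))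
    (hpos : 0 < L₁ ∨ 0 < L₂)
    (o : ℕ → ℝ) (ho : ∀ n, o n = ∑ ij ∈ Finset.HasAntidiagonal.antidiagonal n, w₁ ij.1 * w₂ ij.2)
    (p₁ p₂ : ℝ) (hp : p₁ + p₂ = 1)
    (hp₁ : Tendsto
      (fun n => w₁ n * (∑' k, o k * ρ ^ k) / (o n * ∑' k, w₁ k * ρ ^ k))
      atTop (𝓝 p₁))
    (hp₂ : Tendsto
      (fun n => w₂ n * (∑' k, o k * ρ ^ k) / (o n * ∑' k, w₂ k * ρ ^ k))
      atTop (𝓝 p₂)) :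
    ∀ k : ℕ,
      Tendsto (fun n => w₁ (n - k) * w₂ k / o n) atTop
        (𝓝 (p₁ * (w₂ k * ρ ^ k / ∑' j, w₂ j * ρ ^ j))) ∧
      Tendsto (fun n => w₁ k * w₂ (n - k) / o n) atTop
        (𝓝 (p₂ * (w₁ k * ρ ^ k / ∑' j, w₁ j * ρ ^ j))) := by
  obtain ⟨-, -, hrpos, hrsum, hratio, -⟩ := hr
  have hr : ∀ᶠ n in atTop, r n ≠ 0 := hrpos.mono fun n hn => hn.ne'
  set O := ∑' k, o k * ρ ^ k
  set W₁ := ∑' k, w₁ k * ρ ^ k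
  set W₂ := ∑' k, w₂ k * ρ ^ k
  have hOW : O = W₁ * W₂ := by
    simp only [O, ho]
    exact tsum_sum_antidiagonal_mul_pow (summable_norm_mul_of_tendsto_div hr hrsum hL₁)
      (summable_norm_mul_of_tendsto_div hr hrsum hL₂)
  -- for `O = 0` both `p₁` and `p₂` would be the junk limit `0`
  have hO : O ≠ 0 := by
    intro hO
    have h₁ : p₁ = 0 := tendsto_nhds_unique hp₁ (by simp [hO])
    have h₂ : p₂ = 0 := tendsto_nhds_unique hp₂ (by simp [hO])
    simp [h₁, h₂] at hp
  obtain ⟨hW₁, hW₂⟩ := mul_ne_zero_iff.mp (hOW ▸ hO)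
  have hq₁ := tendsto_div_of_tendsto_mul_div_mul hO hW₁ hp₁
  have hq₂ := tendsto_div_of_tendsto_mul_div_mul hO hW₂ hp₂
  obtain ⟨ℓ, hℓ⟩ : ∃ ℓ, Tendsto (fun n => r n / o n) atTop (𝓝 ℓ) :=
    hpos.elim (fun h => ⟨_, tendsto_div_of_tendsto_div_div hL₁ h.ne' hq₁⟩)
      (fun h => ⟨_, tendsto_div_of_tendsto_div_div hL₂ h.ne' hq₂⟩)
  intro k
  constructor
  · convert (tendsto_sub_div_of_tendsto_div hr hratio hℓ hL₁ hq₁ k).mul_const (w₂ k) using 1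
    · ext n; ring
    · rw [hOW]; field_simp
  · convert (tendsto_sub_div_of_tendsto_div hr hratio hℓ hL₂ hq₂ k).const_mul (w₁ k) using 1
    · ext n; ring
    · rw [hOW]; field_simp

/-- limit law of the product structure `(P_1, P_2)` with
`P((P_1,P_2) = (k_1,k_2)) = w^{(1)}_{k_1} w^{(2)}_{k_2} / o_n` for `k_1 + k_2 = n`.
For each fixed `k`, `P(P_2 = k) = w^{(1)}_{n-k} w^{(2)}_k / o_n → p_1 · w^{(2)}_k ρ^k / W_2(ρ)`
and symmetrically `P(P_1 = k) → p_2 · w^{(1)}_k ρ^k / W_1(ρ)`. -/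
theorem product_structure_limit
    (r : ℕ → ℝ) (ρ : ℝ) (hr : Subexponential r ρ)
    (w₁ w₂ : ℕ → ℝ) (hw₁ : ∀ n, 0 ≤ w₁ n) (hw₂ : ∀ n, 0 ≤ w₂ n)
    (L₁ L₂ : ℝ) (hL₁0 : 0 ≤ L₁) (hL₂0 : 0 ≤ L₂)
    (hL₁ : Tendsto (fun n => w₁ n / r n) atTop (𝓝 L₁))
    (hL₂ : Tendsto (fun n => w₂ n / r n) atTop (𝓝 L₂))
    (hpos : 0 < L₁ ∨ 0 < L₂)
    (o : ℕ → ℝ) (ho : ∀ n, o n = ∑ ij ∈ Finset.HasAntidiagonal.antidiagonal n, w₁ ij.1 * w₂ ij.2)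
    (p₁ p₂ : ℝ) (hp : p₁ + p₂ = 1)
    (hp₁ : Tendsto
      (fun n => w₁ n * (∑' k, o k * ρ ^ k) / (o n * ∑' k, w₁ k * ρ ^ k))
      atTop (𝓝 p₁))
    (hp₂ : Tendsto
      (fun n => w₂ n * (∑' k, o k * ρ ^ k) / (o n * ∑' k, w₂ k * ρ ^ k))
      atTop (𝓝 p₂)) :
    ∀ k : ℕ,
      Tendsto (fun n => w₁ (n - k) * w₂ k / o n) atTop
        (𝓝 (p₁ * (w₂ k * ρ ^ k / ∑' j, w₂ j * ρ ^ j))) ∧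
      Tendsto (fun n => w₁ k * w₂ (n - k) / o n) atTop
        (𝓝 (p₂ * (w₁ k * ρ ^ k / ∑' j, w₁ j * ρ ^ j))) :=
  product_structure_limit_general r ρ hr w₁ w₂ L₁ L₂ hL₁ hL₂ hpos o ho p₁ p₂ hp hp₁ hp₂
end

section
/- Convergent case local structure: Suppose 0 < V'(W(ρ_w)) < ∞ and assume P(S_N = n) ~ E[N]·P(X = n) and P(X = n−y) ~ P(X = n) as n → ∞ for each fixed y ≥ 0, where X has PGF W(ρ_w z)/W(ρ_w), N has PGF V(W(ρ_w)z)/V(W(ρ_w)), X_1, X_2, … are i.i.d. copies of X independent of N, and S_N = ∑_{i=1}^N X_i. Then for all integers 1 ≤ j ≤ m and x_1,…,x_{m−1} ≥ 0 with y = ∑ x_i, the probability that the component-size vector of the Gibbs partition equals (x_1,…,x_{j−1}, n−y, x_j,…,x_{m−1}) converges, as n → ∞, to (P(N=m)/E[N]) · ∏_{i=1}^{m−1} P(X = x_i). -/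
/-!
The probability of the given component-size vector is
`P(N = m) ∏ P(X = x_i) · P(X = n - y) / P(S_N = n)`. Since `P(X = n - y) ∼ P(X = n)` and
`P(S_N = n) ∼ E[N] P(X = n)`, the last factor tends to `1 / E[N]`.
-/

open Filter Topology

/-- `P(X_1 + ⋯ + X_ℓ = n)` for i.i.d. `X_i` with distribution `p` on `ℕ`. -/
noncomputable def iidSumProb (p : ℕ → ℝ) (ℓ n : ℕ) : ℝ :=
  ∑ f ∈ Finset.Nat.antidiagonalTuple ℓ n, ∏ i, p (f i)

theorem tendsto_const_mul_div_of_ratios {α : Type*} {l : Filter α} {u v w : α → ℝ} {c e : ℝ}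
    (he : e ≠ 0) (hv : ∀ᶠ n in l, v n ≠ 0)
    (huv : Tendsto (fun n => u n / v n) l (𝓝 1))
    (hwv : Tendsto (fun n => w n / (e * v n)) l (𝓝 1)) :
    Tendsto (fun n => c * u n / w n) l (𝓝 (c / e)) := by
  have hw : ∀ᶠ n in l, w n ≠ 0 := by
    filter_upwards [hwv.eventually_ne one_ne_zero] with n hn hw
    simp [hw] at hn
  have hlim : Tendsto (fun n => c / e * (u n / v n * (w n / (e * v n))⁻¹)) l
      (𝓝 (c / e * (1 * 1⁻¹))) :=
    (huv.mul (hwv.inv₀ one_ne_zero)).const_mul _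
  rw [mul_inv_cancel₀ one_ne_zero, mul_one] at hlim
  refine hlim.congr' ?_
  filter_upwards [hv, hw] with n hvn hwn
  field_simp

theorem convergent_case_local_structure_general
    (pX pN : ℕ → ℝ)
    (hENpos : 0 < ∑' ℓ : ℕ, (ℓ : ℝ) * pN ℓ)
    (hXpos : ∀ᶠ n in atTop, 0 < pX n)
    (hXloc : ∀ y : ℕ, Tendsto (fun n => pX (n - y) / pX n) atTop (𝓝 1))
    (hSN : Tendsto
      (fun n => (∑' ℓ, pN ℓ * iidSumProb pX ℓ n) / ((∑' ℓ : ℕ, (ℓ : ℝ) * pN ℓ) * pX n))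
      atTop (𝓝 1)) :
    ∀ a b : List ℕ,
      Tendsto
        (fun n =>
          pN (a.length + b.length + 1) *
            ((a.map pX).prod * pX (n - (a.sum + b.sum)) * (b.map pX).prod) /
            ∑' ℓ, pN ℓ * iidSumProb pX ℓ n)
        atTop
        (𝓝 (pN (a.length + b.length + 1) / (∑' ℓ : ℕ, (ℓ : ℝ) * pN ℓ) *
          ((a ++ b).map pX).prod)) := by
  intro a b
  have h := tendsto_const_mul_div_of_ratios
    (c := pN (a.length + b.length + 1) * (a.map pX).prod * (b.map pX).prod)
    hENpos.ne' (hXpos.mono fun _ => ne_of_gt) (hXloc (a.sum + b.sum)) hSN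
  convert h using 2 with n
  · ring
  · rw [List.map_append, List.prod_append]
    ring

/-- **convergent case, local structure**: let `pX` be the law of `X`
(PGF `W(ρ_w z)/W(ρ_w)`) and `pN` the law of `N` (PGF `V(W(ρ_w)z)/V(W(ρ_w))`), with
`0 < E[N] < ∞` (i.e. `0 < V'(W(ρ_w)) < ∞`).  Assume `X` is locally subexponential:
`P(X = n - y) ∼ P(X = n)` for each fixed `y` and `P(X_1+X_2=n) ∼ 2 P(X=n)`, and assume
`P(S_N = n) ∼ E[N] P(X = n)`.  Under Kolchin's representation the probability that the
component-size vector equals `(x_1,…,x_{j-1}, n-y, x_j,…,x_{m-1})` — encoded by the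
lists `a = (x_1,…,x_{j-1})` and `b = (x_j,…,x_{m-1})`, `m = |a|+|b|+1`, `y = Σa + Σb` —
converges to `(P(N = m)/E[N]) ∏_{i=1}^{m-1} P(X = x_i)`. -/
theorem convergent_case_local_structure
    (pX pN : ℕ → ℝ)
    (hpX0 : ∀ k, 0 ≤ pX k) (hpX1 : ∑' k, pX k = 1)
    (hpN0 : ∀ k, 0 ≤ pN k) (hpN1 : ∑' k, pN k = 1)
    (hENsum : Summable (fun ℓ : ℕ => (ℓ : ℝ) * pN ℓ))
    (hENpos : 0 < ∑' ℓ : ℕ, (ℓ : ℝ) * pN ℓ)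
    (hXpos : ∀ᶠ n in atTop, 0 < pX n)
    (hXloc : ∀ y : ℕ, Tendsto (fun n => pX (n - y) / pX n) atTop (𝓝 1))
    (hXsubexp : Tendsto (fun n => iidSumProb pX 2 n / pX n) atTop (𝓝 2))
    (hSN : Tendsto
      (fun n => (∑' ℓ, pN ℓ * iidSumProb pX ℓ n) / ((∑' ℓ : ℕ, (ℓ : ℝ) * pN ℓ) * pX n))
      atTop (𝓝 1)) :
    ∀ a b : List ℕ,
      Tendsto
        (fun n =>
          pN (a.length + b.length + 1) *
            ((a.map pX).prod * pX (n - (a.sum + b.sum)) * (b.map pX).prod) /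
            ∑' ℓ, pN ℓ * iidSumProb pX ℓ n)
        atTop
        (𝓝 (pN (a.length + b.length + 1) / (∑' ℓ : ℕ, (ℓ : ℝ) * pN ℓ) *
          ((a ++ b).map pX).prod)) :=
  convergent_case_local_structure_general pX pN hENpos hXpos hXloc hSN
end

section
/- In the convergent case, the number of components converges in distribution to the size-biased variable: under the hypotheses of the convergent-case theorem (in particular P(S_N = n) ~ E[N]·P(X=n) and the local subexponential property of X), N_n →_d N̂ as n → ∞, where N̂ has probability generating function E[z^{N̂}] = z·V'(W(ρ_w)z)/V'(W(ρ_w)). -/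
/-!
`P(N_n = ℓ) = P(N = ℓ) P(S_ℓ = n) / P(S_N = n)` and the denominator is `∼ E[N] P(X = n)` by
hypothesis, so everything reduces to `P(S_ℓ = n) ∼ ℓ P(X = n)` for each fixed `ℓ`. This follows by
induction on `ℓ` from a convolution property of locally subexponential laws: if `a ≥ 0` has total
mass `A` and `a(n) ∼ α P(X = n)`, then `(P_X * a)(n) ∼ (α + A) P(X = n)`. Split the convolution
sum at distance `M` from both ends. By `P(X = n - y) ∼ P(X = n)` the two end pieces are
asymptotic to `α P(X ≤ M) P(X = n)` and `(a 0 + ⋯ + a M) P(X = n)`. Since `a ≤ (α + 1) P_X` far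
out, the middle piece is at most `α + 1` times the middle piece of `P(S_2 = n)`, which is
`∼ 2 P(X > M) P(X = n)` precisely because `P(S_2 = n) ∼ 2 P(X = n)`. Now let `M → ∞`.
-/

open Filter Topology

open Finset

theorem tendsto_of_approximations {ι κ : Type*} {l : Filter ι} {m : Filter κ} [m.NeBot]
    {Q : ι → ℝ} {u w : κ → ι → ℝ} {L e : κ → ℝ} {c : ℝ}
    (hu : ∀ M, Tendsto (u M) l (𝓝 (L M))) (hL : Tendsto L m (𝓝 c))
    (hw : ∀ M, Tendsto (w M) l (𝓝 (e M))) (he : Tendsto e m (𝓝 0))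
    (hQ : ∀ᶠ M in m, ∀ᶠ n in l, |Q n - u M n| ≤ w M n) :
    Tendsto Q l (𝓝 c) := by
  rw [Metric.tendsto_nhds]
  intro ε hε
  have hε4 : 0 < ε / 4 := by positivity
  obtain ⟨M, hQM, hLM, heM⟩ := (hQ.and ((hL.eventually (Metric.ball_mem_nhds c hε4)).and
    (he.eventually (Metric.ball_mem_nhds 0 hε4)))).exists
  filter_upwards [hQM, (hu M).eventually (Metric.ball_mem_nhds _ hε4),
    (hw M).eventually (Metric.ball_mem_nhds _ hε4)] with n hQn hun hwn
  simp only [Real.dist_eq, abs_lt] at hLM heM hun hwn ⊢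
  have := abs_le.mp hQn
  constructor <;> linarith

noncomputable def natConv (p a : ℕ → ℝ) (n : ℕ) : ℝ :=
  ∑ k ∈ range (n + 1), p k * a (n - k)

theorem hasSum_natConv {p a : ℕ → ℝ} {P A : ℝ} (hp0 : ∀ k, 0 ≤ p k) (ha0 : ∀ k, 0 ≤ a k)
    (hp : HasSum p P) (ha : HasSum a A) : HasSum (natConv p a) (P * A) := by
  have hpn : Summable fun k => ‖p k‖ := by
    simpa only [Real.norm_of_nonneg (hp0 _)] using hp.summable
  have han : Summable fun k => ‖a k‖ := by
    simpa only [Real.norm_of_nonneg (ha0 _)] using ha.summable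
  have h := hasSum_sum_range_mul_of_summable_norm hpn han
  rwa [hp.tsum_eq, ha.tsum_eq] at h

theorem natConv_eq_head_add_middle_add_tail (p a : ℕ → ℝ) {M n : ℕ} (h : 2 * M + 1 ≤ n) :
    natConv p a n = ∑ k ∈ range (M + 1), p k * a (n - k)
      + ∑ k ∈ Ico (M + 1) (n - M), p k * a (n - k) + ∑ j ∈ range (M + 1), a j * p (n - j) := by
  have htail : ∑ j ∈ range (M + 1), a j * p (n - j)
      = ∑ k ∈ Ico (n - M) (n + 1), p k * a (n - k) := by
    have hreflect := sum_Ico_reflect (fun k => p k * a (n - k)) 0 (by omega : M + 1 ≤ n + 1)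
    rw [show n + 1 - (M + 1) = n - M by omega, Nat.sub_zero] at hreflect
    rw [← hreflect, range_eq_Ico]
    refine sum_congr rfl fun j hj => ?_
    rw [mul_comm, Nat.sub_sub_self (by simp at hj; omega)]
  rw [natConv, htail, ← sum_range_add_sum_Ico _ (by omega : M + 1 ≤ n + 1),
    ← sum_Ico_consecutive _ (by omega : M + 1 ≤ n - M) (by omega : n - M ≤ n + 1), add_assoc]

theorem iidSumProb_zero (p : ℕ → ℝ) (n : ℕ) :
    iidSumProb p 0 n = if n = 0 then 1 else 0 := by
  cases n <;> simp [iidSumProb, Nat.antidiagonalTuple_zero_succ]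

theorem iidSumProb_one (p : ℕ → ℝ) : iidSumProb p 1 = p := by
  ext n
  simp [iidSumProb, Nat.antidiagonalTuple_one]

theorem iidSumProb_succ (p : ℕ → ℝ) (ℓ : ℕ) :
    iidSumProb p (ℓ + 1) = natConv p (iidSumProb p ℓ) := by
  ext n
  rw [natConv, ← Nat.sum_antidiagonal_eq_sum_range_succ fun k j => p k * iidSumProb p ℓ j]
  -- `antidiagonalTuple (ℓ + 1) n` is built by consing each first coordinate `k ≤ n` onto the
  -- `ℓ`-tuples summing to `n - k`.
  change ((List.Nat.antidiagonalTuple (ℓ + 1) n).map _).sum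
    = ((List.Nat.antidiagonal n).map _).sum
  simp only [List.Nat.antidiagonalTuple, List.flatMap, List.map_flatten, List.sum_flatten,
    List.map_map]
  congr 1
  refine List.map_congr_left fun x _ => ?_
  simp only [List.map_map, Function.comp_def, Fin.prod_univ_succ, Fin.cons_zero, Fin.cons_succ,
    iidSumProb, mul_sum]
  rfl

theorem iidSumProb_nonneg {p : ℕ → ℝ} (hp0 : ∀ k, 0 ≤ p k) (ℓ n : ℕ) :
    0 ≤ iidSumProb p ℓ n :=
  sum_nonneg fun f _ => prod_nonneg fun i _ => hp0 (f i)

theorem hasSum_iidSumProb {p : ℕ → ℝ} (hp0 : ∀ k, 0 ≤ p k) (hp : HasSum p 1) (ℓ : ℕ) :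
    HasSum (iidSumProb p ℓ) 1 := by
  induction ℓ with
  | zero => simpa only [funext (iidSumProb_zero p)] using hasSum_ite_eq 0 (1 : ℝ)
  | succ ℓ ih =>
    simpa only [iidSumProb_succ, one_mul] using
      hasSum_natConv hp0 (iidSumProb_nonneg hp0 ℓ) hp ih

theorem tendsto_sub_div_of_tendsto_div_s9 {p a : ℕ → ℝ} {α : ℝ} {k : ℕ}
    (hp : ∀ᶠ n in atTop, p n ≠ 0) (hk : Tendsto (fun n => p (n - k) / p n) atTop (𝓝 1))
    (ha : Tendsto (fun n => a n / p n) atTop (𝓝 α)) :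
    Tendsto (fun n => a (n - k) / p n) atTop (𝓝 α) := by
  have hprod := (ha.comp (tendsto_sub_atTop_nat k)).mul hk
  rw [mul_one] at hprod
  refine hprod.congr' ?_
  filter_upwards [(tendsto_sub_atTop_nat k).eventually hp] with n hn
  simp only [Function.comp_apply]
  field_simp

structure IsLocallySubexponential (p : ℕ → ℝ) : Prop where
  nonneg : ∀ k, 0 ≤ p k
  hasSum : HasSum p 1
  tendsto_sub_div : ∀ y, Tendsto (fun n => p (n - y) / p n) atTop (𝓝 1)
  tendsto_iidSumProb_two_div : Tendsto (fun n => iidSumProb p 2 n / p n) atTop (𝓝 2)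

namespace IsLocallySubexponential

variable {p : ℕ → ℝ}

theorem eventually_pos (hp : IsLocallySubexponential p) : ∀ᶠ n in atTop, 0 < p n := by
  filter_upwards [(hp.tendsto_sub_div 0).eventually_ne one_ne_zero] with n hn
  exact (hp.nonneg n).lt_of_ne' fun h => hn (by simp [h])

theorem tendsto_div_self (hp : IsLocallySubexponential p) :
    Tendsto (fun n => p n / p n) atTop (𝓝 1) := by
  simpa using hp.tendsto_sub_div 0

theorem tendsto_sum_mul_sub_div (hp : IsLocallySubexponential p) {a : ℕ → ℝ} {α : ℝ}
    (ha : Tendsto (fun n => a n / p n) atTop (𝓝 α)) (c : ℕ → ℝ) (s : Finset ℕ) :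
    Tendsto (fun n => (∑ k ∈ s, c k * a (n - k)) / p n) atTop (𝓝 ((∑ k ∈ s, c k) * α)) := by
  simp only [sum_div, sum_mul, mul_div_assoc]
  exact tendsto_finsetSum s fun k _ => (tendsto_sub_div_of_tendsto_div_s9
    (hp.eventually_pos.mono fun _ h => h.ne') (hp.tendsto_sub_div k) ha).const_mul (c k)

theorem tendsto_middle_div (hp : IsLocallySubexponential p) (M : ℕ) :
    Tendsto (fun n => (∑ k ∈ Ico (M + 1) (n - M), p k * p (n - k)) / p n) atTop
      (𝓝 (2 - 2 * ∑ k ∈ range (M + 1), p k)) := by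
  have hend := hp.tendsto_sum_mul_sub_div hp.tendsto_div_self p (range (M + 1))
  have hconv := hp.tendsto_iidSumProb_two_div
  rw [iidSumProb_succ, iidSumProb_one] at hconv
  convert (hconv.sub (hend.add hend)).congr' ?_ using 2
  · ring
  · filter_upwards [eventually_ge_atTop (2 * M + 1)] with n hn
    rw [natConv_eq_head_add_middle_add_tail p p hn]
    ring

theorem tendsto_natConv_div (hp : IsLocallySubexponential p) {a : ℕ → ℝ} {α A : ℝ}
    (ha0 : ∀ k, 0 ≤ a k) (ha : HasSum a A) (haα : Tendsto (fun n => a n / p n) atTop (𝓝 α)) :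
    Tendsto (fun n => natConv p a n / p n) atTop (𝓝 (α + A)) := by
  obtain ⟨n₀, hdom⟩ : ∃ n₀, ∀ m ≥ n₀, a m ≤ (α + 1) * p m := by
    refine eventually_atTop.mp ?_
    filter_upwards [haα.eventually (eventually_le_nhds (lt_add_one α)), hp.eventually_pos]
      with m hm hpm
    rwa [div_le_iff₀ hpm] at hm
  have hpartial {b : ℕ → ℝ} {B : ℝ} (hb : HasSum b B) :
      Tendsto (fun M => ∑ k ∈ range (M + 1), b k) atTop (𝓝 B) :=
    hb.tendsto_sum_nat.comp (tendsto_add_atTop_nat 1)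
  refine tendsto_of_approximations (m := atTop)
    (u := fun M n => (∑ k ∈ range (M + 1), p k * a (n - k)
      + ∑ j ∈ range (M + 1), a j * p (n - j)) / p n)
    (w := fun M n => (α + 1) * ((∑ k ∈ Ico (M + 1) (n - M), p k * p (n - k)) / p n))
    (L := fun M => (∑ k ∈ range (M + 1), p k) * α + ∑ j ∈ range (M + 1), a j)
    (fun M => ?_) ?_ (fun M => (hp.tendsto_middle_div M).const_mul (α + 1)) ?_ ?_
  · simpa only [add_div, mul_one] using (hp.tendsto_sum_mul_sub_div haα p _).add
      (hp.tendsto_sum_mul_sub_div hp.tendsto_div_self a _)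
  · simpa only [one_mul] using ((hpartial hp.hasSum).mul_const α).add (hpartial ha)
  · simpa using ((hpartial hp.hasSum).const_mul 2).const_sub 2 |>.const_mul (α + 1)
  · filter_upwards [eventually_ge_atTop n₀] with M hM
    filter_upwards [eventually_ge_atTop (2 * M + 1), hp.eventually_pos] with n hn hpn
    have hmiddle : natConv p a n / p n - (∑ k ∈ range (M + 1), p k * a (n - k)
        + ∑ j ∈ range (M + 1), a j * p (n - j)) / p n
        = (∑ k ∈ Ico (M + 1) (n - M), p k * a (n - k)) / p n := by
      rw [natConv_eq_head_add_middle_add_tail p a hn]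
      ring
    rw [hmiddle, abs_of_nonneg (div_nonneg (sum_nonneg fun k _ =>
      mul_nonneg (hp.nonneg k) (ha0 _)) hpn.le), ← mul_div_assoc, mul_sum]
    refine div_le_div_of_nonneg_right (sum_le_sum fun k hk => ?_) hpn.le
    rw [mem_Ico] at hk
    calc p k * a (n - k) ≤ p k * ((α + 1) * p (n - k)) :=
          mul_le_mul_of_nonneg_left (hdom _ (by omega)) (hp.nonneg k)
      _ = (α + 1) * (p k * p (n - k)) := by ring

theorem tendsto_iidSumProb_div (hp : IsLocallySubexponential p) (ℓ : ℕ) :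
    Tendsto (fun n => iidSumProb p ℓ n / p n) atTop (𝓝 ℓ) := by
  induction ℓ with
  | zero =>
    refine tendsto_const_nhds.congr' ?_
    filter_upwards [eventually_ne_atTop 0] with n hn
    simp [iidSumProb_zero, hn]
  | succ ℓ ih =>
    simpa only [iidSumProb_succ, Nat.cast_succ] using hp.tendsto_natConv_div
      (iidSumProb_nonneg hp.nonneg ℓ) (hasSum_iidSumProb hp.nonneg hp.hasSum ℓ) ih

end IsLocallySubexponential

/-- By Kolchin's representation, `pN ℓ * iidSumProb pX ℓ n / ∑' j, pN j * iidSumProb pX j n` is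
`P(N_n = ℓ)`, and `ℓ pN ℓ / E[N]` is `P(N̂ = ℓ)`. -/
theorem convergent_case_number_of_components_general
    (pX pN : ℕ → ℝ)
    (hpX0 : ∀ k, 0 ≤ pX k) (hpX1 : ∑' k, pX k = 1)
    (hENpos : 0 < ∑' ℓ : ℕ, (ℓ : ℝ) * pN ℓ)
    (hXloc : ∀ y : ℕ, Tendsto (fun n => pX (n - y) / pX n) atTop (𝓝 1))
    (hXsubexp : Tendsto (fun n => iidSumProb pX 2 n / pX n) atTop (𝓝 2))
    (hSN : Tendsto
      (fun n => (∑' ℓ, pN ℓ * iidSumProb pX ℓ n) /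
        ((∑' ℓ : ℕ, (ℓ : ℝ) * pN ℓ) * pX n))
      atTop (𝓝 1)) :
    ∀ ℓ : ℕ,
      Tendsto
        (fun n => pN ℓ * iidSumProb pX ℓ n / ∑' j, pN j * iidSumProb pX j n)
        atTop
        (𝓝 ((ℓ : ℝ) * pN ℓ / ∑' j : ℕ, (j : ℝ) * pN j)) := by
  intro ℓ
  have hsummable : Summable pX := by
    by_contra h
    simp [tsum_eq_zero_of_not_summable h] at hpX1
  have hX : IsLocallySubexponential pX := ⟨hpX0, hpX1 ▸ hsummable.hasSum, hXloc, hXsubexp⟩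
  set E := ∑' j : ℕ, (j : ℝ) * pN j
  have hnum : Tendsto (fun n => pN ℓ * (iidSumProb pX ℓ n / pX n) / E) atTop
      (𝓝 (ℓ * pN ℓ / E)) := by
    simpa only [mul_comm (pN ℓ)] using
      ((hX.tendsto_iidSumProb_div ℓ).const_mul (pN ℓ)).div_const E
  refine (div_one (ℓ * pN ℓ / E) ▸ hnum.div hSN one_ne_zero).congr' ?_
  filter_upwards [hX.eventually_pos] with n hpn
  rw [Pi.div_apply, div_div_eq_mul_div]
  congr 1
  field_simp [hENpos.ne']

/-- **convergent case, number of components**: under the hypotheses of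
the convergent case — `pX` the law of `X` (PGF `W(ρ_w z)/W(ρ_w)`), `pN` the law of `N`
(PGF `V(W(ρ_w)z)/V(W(ρ_w))`), `0 < E[N] < ∞` (i.e. `0 < V'(W(ρ_w)) < ∞`), local
subexponentiality of `X`, and `P(S_N = n) ∼ E[N] P(X = n)` — the number of components
`N_n`, whose law via Kolchin's representation is
`P(N_n = ℓ) = pN ℓ · P(S_ℓ = n) / P(S_N = n)`, converges in distribution to the
size-biased variable `N̂` with `P(N̂ = ℓ) = ℓ pN ℓ / E[N]`
(PGF `z V'(W(ρ_w)z)/V'(W(ρ_w))`). -/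
theorem convergent_case_number_of_components
    (pX pN : ℕ → ℝ)
    (hpX0 : ∀ k, 0 ≤ pX k) (hpX1 : ∑' k, pX k = 1)
    (hpN0 : ∀ k, 0 ≤ pN k) (hpN1 : ∑' k, pN k = 1)
    (hENsum : Summable (fun ℓ : ℕ => (ℓ : ℝ) * pN ℓ))
    (hENpos : 0 < ∑' ℓ : ℕ, (ℓ : ℝ) * pN ℓ)
    (hXpos : ∀ᶠ n in atTop, 0 < pX n)
    (hXloc : ∀ y : ℕ, Tendsto (fun n => pX (n - y) / pX n) atTop (𝓝 1))
    (hXsubexp : Tendsto (fun n => iidSumProb pX 2 n / pX n) atTop (𝓝 2))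
    (hSN : Tendsto
      (fun n => (∑' ℓ, pN ℓ * iidSumProb pX ℓ n) /
        ((∑' ℓ : ℕ, (ℓ : ℝ) * pN ℓ) * pX n))
      atTop (𝓝 1)) :
    ∀ ℓ : ℕ,
      Tendsto
        (fun n => pN ℓ * iidSumProb pX ℓ n / ∑' j, pN j * iidSumProb pX j n)
        atTop
        (𝓝 ((ℓ : ℝ) * pN ℓ / ∑' j : ℕ, (j : ℝ) * pN j)) :=
  convergent_case_number_of_components_general pX pN hpX0 hpX1 hENpos hXloc hXsubexp hSN
end
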